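/- arXiv:1510.02339 — 3 statements merged into one kernel-verified Lean document; each statement's English description precedes it below -/
import Mathlib

section
/- Let Ω = {z ∈ ℂ : −2 < Re z < 2 and −4 < Im z < 0}, an open bounded convex square in ℂ. For every natural number n ≥ 1 there exists a complex polynomial p of degree n + 1 such that p has at least n roots (counted with multiplicity) in Ω, while the derivative p' has no roots in Ω. Consequently, there exists a sequence of polynomials (p_n) with deg p_n = n + 1 → ∞ and #_{p_n}(Ω)/deg p_n → 1, yet #_{p_n'}(Ω) = 0 for all n. -/
open Filter Polynomial
open scoped Classical

/-!
Take `p = (X - I) * ∏ (X - aₖ)` with `n` roots `aₖ = xₖ - ε I` equally spaced along a line just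
below the top edge of the square. All roots are simple, so a critical point `z` of `p` in the
square is not a root and `∑ (z - a)⁻¹ = 0` over all roots. Below the line every term has
nonnegative imaginary part and the term of `I` a positive one. In the thin strip between the line
and the edge, either `Re z` is within `ρ` of some `xₖ`, and then `(z - aₖ)⁻¹` dominates the sum in
norm, or it is not, and then the lower roots contribute imaginary parts of size at most `ε / ρ²`
each, too little to cancel the term of `I`.
-/

open Complex

theorem Polynomial.eval_derivative_prod_X_sub_C_ne_zero {K : Type*} [Field K] {s : Finset K}
    {z : K} (hs : z ∉ s → ∑ a ∈ s, (z - a)⁻¹ ≠ 0) :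
    (derivative (∏ a ∈ s, (X - C a))).eval z ≠ 0 := by
  by_cases hz : z ∈ s
  · rw [Finset.prod_eq_multiset_prod, eval_multiset_prod_X_sub_C_derivative hz]
    refine Multiset.prod_ne_zero fun h ↦ ?_
    obtain ⟨a, ha, hza⟩ := Multiset.mem_map.mp h
    exact (s.nodup.mem_erase_iff.mp ha).1 (sub_eq_zero.mp hza).symm
  · have hP : (∏ a ∈ s, (X - C a)).eval z ≠ 0 := by
      simp only [eval_prod, eval_sub, eval_X, eval_C]
      exact Finset.prod_ne_zero_iff.mpr fun a ha ↦
        sub_ne_zero.mpr (ne_of_mem_of_not_mem ha hz).symm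
    rw [(Splits.prod fun a _ ↦ Splits.X_sub_C a).eval_derivative_eq_eval_mul_sum hP,
      roots_prod_X_sub_C]
    refine mul_ne_zero hP ?_
    simp only [one_div]
    exact hs hz

theorem Finset.sum_ne_zero_of_sum_erase_norm_lt {ι E : Type*} [NormedAddCommGroup E]
    [DecidableEq ι] {s : Finset ι} {f : ι → E} {i : ι} (hi : i ∈ s)
    (h : ∑ j ∈ s.erase i, ‖f j‖ < ‖f i‖) : ∑ j ∈ s, f j ≠ 0 := by
  intro h0
  rw [← Finset.add_sum_erase s f hi, add_eq_zero_iff_eq_neg] at h0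
  have := norm_sum_le (s.erase i) f
  rw [← norm_neg, ← h0] at this
  exact (this.trans_lt h).false

namespace Complex

theorem im_inv_sub_nonneg {z a : ℂ} (h : z.im ≤ a.im) : 0 ≤ ((z - a)⁻¹).im := by
  rw [inv_im, sub_im]
  exact div_nonneg (by linarith) (normSq_nonneg _)

theorem im_inv_sub_pos {z a : ℂ} (h : z.im < a.im) : 0 < ((z - a)⁻¹).im := by
  have hza : z - a ≠ 0 := fun h0 ↦ by
    have := congrArg im h0
    simp only [sub_im, zero_im] at this
    linarith
  rw [inv_im, sub_im]
  exact div_pos (by linarith) (normSq_pos.mpr hza)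

theorem abs_im_inv_le {w : ℂ} {ρ ε : ℝ} (hρ : 0 < ρ) (hre : ρ ≤ |w.re|) (him : |w.im| ≤ ε) :
    |(w⁻¹).im| ≤ ε / ρ ^ 2 := by
  have hnormSq : ρ ^ 2 ≤ normSq w := by
    rw [normSq_apply, ← abs_mul_abs_self w.re]
    nlinarith [mul_self_nonneg w.im]
  rw [inv_im, abs_div, abs_neg, abs_of_nonneg (normSq_nonneg _)]
  exact div_le_div₀ ((abs_nonneg _).trans him) him (by positivity) hnormSq

end Complex

namespace NaiveGaussLucas

noncomputable section

-- Reducible, so that `(· ∈ square)` is decided by the same instance as the set-builder `Ω`.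
abbrev square : Set ℂ := {z : ℂ | -2 < z.re ∧ z.re < 2 ∧ -4 < z.im ∧ z.im < 0}

def node (n k : ℕ) : ℝ := -2 + 4 * k / (n + 1)

/- Near `lowRoot n k`, `radius` makes `(z - lowRoot n k)⁻¹` of size at least `(n + 1) ^ 2`, beating
the `n` other terms of size at most `n + 1`; away from the nodes, `depth` makes the imaginary parts
of the `n` lower terms sum to less than the `1 / 8` contributed by the root `I`. -/
def radius (n : ℕ) : ℝ := 1 / (2 * (n + 1) ^ 2)

def depth (n : ℕ) : ℝ := radius n ^ 2 / (8 * (n + 1))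

def lowRoot (n k : ℕ) : ℂ := ⟨node n k, -depth n⟩

def rootFinset (n : ℕ) : Finset ℂ := insert I ((Finset.Icc 1 n).image (lowRoot n))

def poly (n : ℕ) : ℂ[X] := ∏ a ∈ rootFinset n, (X - C a)

variable {n : ℕ}

theorem radius_pos (n : ℕ) : 0 < radius n := by
  unfold radius; positivity

theorem depth_pos (n : ℕ) : 0 < depth n := by
  have := radius_pos n
  unfold depth; positivity

theorem radius_le_one_div (n : ℕ) : radius n ≤ 1 / (2 * (n + 1)) := by
  unfold radius
  gcongr
  nlinarith [(by positivity : (0 : ℝ) ≤ n)]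

theorem radius_le_half (n : ℕ) : radius n ≤ 1 / 2 :=
  (radius_le_one_div n).trans (by gcongr; linarith [(by positivity : (0 : ℝ) ≤ n)])

theorem depth_le_radius (n : ℕ) : depth n ≤ radius n := by
  have := radius_pos n
  have := radius_le_half n
  rw [depth, div_le_iff₀ (by positivity)]
  nlinarith [(by positivity : (0 : ℝ) ≤ n)]

theorem depth_div_radius_sq (n : ℕ) : depth n / radius n ^ 2 = 1 / (8 * (n + 1)) := by
  have := (radius_pos n).ne'
  unfold depth
  field_simp

theorem four_div_le_abs_node_sub_node {k l : ℕ} (hkl : k ≠ l) :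
    4 / (n + 1) ≤ |node n k - node n l| := by
  have hkl' : (1 : ℝ) ≤ |(k : ℝ) - l| := by
    rcases lt_or_gt_of_ne hkl with h | h
    · have : (k : ℝ) + 1 ≤ l := by exact_mod_cast h
      exact le_abs.mpr (Or.inr (by linarith))
    · have : (l : ℝ) + 1 ≤ k := by exact_mod_cast h
      exact le_abs.mpr (Or.inl (by linarith))
  rw [show node n k - node n l = 4 * ((k : ℝ) - l) / (n + 1) by unfold node; ring,
    abs_div, abs_mul, abs_of_pos (by norm_num : (0 : ℝ) < 4),
    abs_of_pos (by positivity : (0 : ℝ) < n + 1)]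
  gcongr
  linarith

theorem node_injective (n : ℕ) : Function.Injective (node n) := by
  intro k l h
  by_contra hkl
  have := four_div_le_abs_node_sub_node (n := n) hkl
  rw [h, sub_self, abs_zero] at this
  linarith [(by positivity : (0 : ℝ) < 4 / (n + 1))]

theorem lowRoot_injective (n : ℕ) : Function.Injective (lowRoot n) :=
  fun _ _ h ↦ node_injective n (congrArg re h)

theorem I_notMem_image_lowRoot : I ∉ (Finset.Icc 1 n).image (lowRoot n) := by
  simp only [Finset.mem_image, not_exists, not_and]
  intro k _ h
  have := congrArg im h
  simp only [lowRoot, I_im] at this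
  linarith [depth_pos n]

theorem card_rootFinset (n : ℕ) : (rootFinset n).card = n + 1 := by
  rw [rootFinset, Finset.card_insert_of_notMem I_notMem_image_lowRoot,
    Finset.card_image_of_injective _ (lowRoot_injective n), Nat.card_Icc, Nat.add_sub_cancel]

theorem natDegree_poly (n : ℕ) : (poly n).natDegree = n + 1 := by
  rw [poly, natDegree_finsetProd_X_sub_C_eq_card, card_rootFinset]

theorem lowRoot_mem_square {k : ℕ} (hk : k ∈ Finset.Icc 1 n) : lowRoot n k ∈ square := by
  obtain ⟨hk1, hkn⟩ := Finset.mem_Icc.mp hk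
  have hk1' : (1 : ℝ) ≤ k := by exact_mod_cast hk1
  have hkn' : (k : ℝ) ≤ n := by exact_mod_cast hkn
  have hdepth : depth n < 4 := by linarith [depth_le_radius n, radius_le_half n]
  refine ⟨?_, ?_, ?_, ?_⟩ <;> simp only [lowRoot, node]
  · have : 0 < 4 * (k : ℝ) / (n + 1) := by positivity
    linarith
  · have : 4 * (k : ℝ) / (n + 1) < 4 := by rw [div_lt_iff₀ (by positivity)]; linarith
    linarith
  · linarith
  · linarith [depth_pos n]

theorem le_card_roots_filter_square (n : ℕ) :
    n ≤ ((poly n).roots.filter (· ∈ square)).card := by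
  rw [poly, roots_prod_X_sub_C, ← Finset.filter_val, ← Finset.card_def]
  calc n = ((Finset.Icc 1 n).image (lowRoot n)).card := by
        rw [Finset.card_image_of_injective _ (lowRoot_injective n), Nat.card_Icc,
          Nat.add_sub_cancel]
    _ ≤ _ := Finset.card_le_card fun a ha ↦ by
        obtain ⟨k, hk, rfl⟩ := Finset.mem_image.mp ha
        exact Finset.mem_filter.mpr ⟨Finset.mem_insert_of_mem ha, lowRoot_mem_square hk⟩

theorem neg_depth_le_im_of_mem_rootFinset {a : ℂ} (ha : a ∈ rootFinset n) : -depth n ≤ a.im := by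
  rcases Finset.mem_insert.mp ha with rfl | ha
  · linarith [depth_pos n, I_im]
  · obtain ⟨k, -, rfl⟩ := Finset.mem_image.mp ha
    exact le_rfl

theorem im_sum_inv_sub_pos_of_im_le {z : ℂ} (hz1 : z.im < 1) (hz : z.im ≤ -depth n) :
    0 < (∑ a ∈ rootFinset n, (z - a)⁻¹).im := by
  rw [im_sum]
  exact Finset.sum_pos'
    (fun a ha ↦ im_inv_sub_nonneg (hz.trans (neg_depth_le_im_of_mem_rootFinset ha)))
    ⟨I, Finset.mem_insert_self _ _, im_inv_sub_pos (by rwa [I_im])⟩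

theorem sum_inv_sub_ne_zero_of_near {z : ℂ} {k : ℕ} (hk : k ∈ Finset.Icc 1 n)
    (hz : z ∉ rootFinset n) (hnear : |z.re - node n k| ≤ radius n) (him : -depth n < z.im)
    (him0 : z.im < 0) : ∑ a ∈ rootFinset n, (z - a)⁻¹ ≠ 0 := by
  set m : ℝ := n + 1
  have hm : 0 < m := by positivity
  have hmem : lowRoot n k ∈ rootFinset n :=
    Finset.mem_insert_of_mem (Finset.mem_image_of_mem _ hk)
  have hmain : m ^ 2 ≤ ‖(z - lowRoot n k)⁻¹‖ := by
    have hnorm : ‖z - lowRoot n k‖ ≤ (m ^ 2)⁻¹ := by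
      have him' : |(z - lowRoot n k).im| ≤ depth n := by
        rw [sub_im, abs_le]
        simp only [lowRoot]
        constructor <;> linarith
      calc ‖z - lowRoot n k‖ ≤ |(z - lowRoot n k).re| + |(z - lowRoot n k).im| :=
            norm_le_abs_re_add_abs_im _
        _ ≤ radius n + radius n := add_le_add hnear (him'.trans (depth_le_radius n))
        _ = (m ^ 2)⁻¹ := by simp only [radius, m]; field_simp; ring
    rw [norm_inv]
    exact (le_inv_comm₀ (by positivity)
      (norm_pos_iff.mpr (sub_ne_zero.mpr fun h ↦ hz (by rwa [h])))).mpr hnorm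
  have hrest : ∀ a ∈ (rootFinset n).erase (lowRoot n k), ‖(z - a)⁻¹‖ ≤ m := by
    intro a ha
    obtain ⟨hak, ha⟩ := Finset.mem_erase.mp ha
    rw [norm_inv]
    refine inv_le_of_inv_le₀ hm ?_
    rcases Finset.mem_insert.mp ha with rfl | ha
    · calc m⁻¹ ≤ 1 :=
            inv_le_one_of_one_le₀ (by simp only [m]; linarith [(by positivity : (0 : ℝ) ≤ n)])
        _ ≤ |(z - I).im| := by rw [sub_im, I_im, abs_of_neg (by linarith)]; linarith
        _ ≤ ‖z - I‖ := abs_im_le_norm _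
    · obtain ⟨l, -, rfl⟩ := Finset.mem_image.mp ha
      have hlk : l ≠ k := fun h ↦ hak (h ▸ rfl)
      have hsep := four_div_le_abs_node_sub_node (n := n) hlk
      have hρ := radius_le_one_div n
      calc m⁻¹ ≤ 4 / m - 1 / (2 * m) := by field_simp; norm_num
        _ ≤ |node n l - node n k| - |z.re - node n k| := by simp only [m]; linarith
        _ ≤ |z.re - node n l| := by
            linarith [abs_sub_le (node n l) z.re (node n k), abs_sub_comm (node n l) z.re]
        _ ≤ ‖z - lowRoot n l‖ := abs_re_le_norm (z - lowRoot n l)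
  refine Finset.sum_ne_zero_of_sum_erase_norm_lt hmem ?_
  calc ∑ a ∈ (rootFinset n).erase (lowRoot n k), ‖(z - a)⁻¹‖
      ≤ ((rootFinset n).erase (lowRoot n k)).card • m := Finset.sum_le_card_nsmul _ _ _ hrest
    _ = n * m := by rw [Finset.card_erase_of_mem hmem, card_rootFinset, nsmul_eq_mul]; simp
    _ < m ^ 2 := by simp only [m]; nlinarith
    _ ≤ _ := hmain

theorem one_div_eight_le_im_inv_sub_I {z : ℂ} (hre : |z.re| ≤ 2) (him : -1 ≤ z.im)
    (him0 : z.im ≤ 0) : 1 / 8 ≤ ((z - I)⁻¹).im := by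
  have hnormSq : normSq (z - I) ≤ 8 := by
    rw [normSq_apply, sub_re, sub_im, I_re, I_im, sub_zero, ← abs_mul_abs_self z.re]
    nlinarith [abs_nonneg z.re]
  have hpos : 0 < normSq (z - I) := by
    rw [normSq_apply, sub_re, sub_im, I_re, I_im]
    nlinarith [mul_self_nonneg (z.re - 0)]
  rw [inv_im, sub_im, I_im, le_div_iff₀ hpos]
  linarith

theorem im_sum_inv_sub_pos_of_far {z : ℂ} (hre : |z.re| ≤ 2) (him : -depth n < z.im)
    (him0 : z.im < 0) (hfar : ∀ k ∈ Finset.Icc 1 n, radius n < |z.re - node n k|) :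
    0 < (∑ a ∈ rootFinset n, (z - a)⁻¹).im := by
  have hlow : ∀ a ∈ (Finset.Icc 1 n).image (lowRoot n),
      -(1 / (8 * (n + 1))) ≤ ((z - a)⁻¹).im := by
    intro a ha
    obtain ⟨k, hk, rfl⟩ := Finset.mem_image.mp ha
    rw [← depth_div_radius_sq]
    refine neg_le_of_abs_le (abs_im_inv_le (radius_pos n) (hfar k hk).le ?_)
    rw [sub_im, abs_le]
    simp only [lowRoot]
    constructor <;> linarith
  have hcard : (((Finset.Icc 1 n).image (lowRoot n)).card : ℝ) ≤ n := by
    exact_mod_cast Finset.card_image_le.trans (by simp)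
  have hsum := Finset.card_nsmul_le_sum _ _ _ hlow
  rw [nsmul_eq_mul] at hsum
  have hI := one_div_eight_le_im_inv_sub_I hre
    (by linarith [depth_le_radius n, radius_le_half n]) him0.le
  have hsmall :
      (((Finset.Icc 1 n).image (lowRoot n)).card : ℝ) * (1 / (8 * (n + 1))) < 1 / 8 := by
    rw [mul_one_div, div_lt_iff₀ (by positivity)]
    linarith
  rw [rootFinset, Finset.sum_insert I_notMem_image_lowRoot, add_im, im_sum]
  linarith

theorem sum_inv_sub_ne_zero {z : ℂ} (hz : z ∈ square) (hzs : z ∉ rootFinset n) :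
    ∑ a ∈ rootFinset n, (z - a)⁻¹ ≠ 0 := by
  obtain ⟨hre₁, hre₂, -, him0⟩ := hz
  have ne_zero_of_im_pos {w : ℂ} (hw : 0 < w.im) : w ≠ 0 := fun h ↦ by simp [h] at hw
  by_cases hlow : z.im ≤ -depth n
  · exact ne_zero_of_im_pos (im_sum_inv_sub_pos_of_im_le (by linarith) hlow)
  push Not at hlow
  by_cases hnear : ∃ k ∈ Finset.Icc 1 n, |z.re - node n k| ≤ radius n
  · obtain ⟨k, hk, hnear⟩ := hnear
    exact sum_inv_sub_ne_zero_of_near hk hzs hnear hlow him0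
  · push Not at hnear
    exact ne_zero_of_im_pos
      (im_sum_inv_sub_pos_of_far (abs_le.mpr ⟨hre₁.le, hre₂.le⟩) hlow him0 hnear)

theorem card_roots_derivative_filter_square (n : ℕ) :
    ((poly n).derivative.roots.filter (· ∈ square)).card = 0 := by
  rw [Multiset.card_eq_zero, Multiset.filter_eq_nil]
  exact fun z hz hzΩ ↦ eval_derivative_prod_X_sub_C_ne_zero (sum_inv_sub_ne_zero hzΩ)
    (mem_roots'.mp hz).2

theorem tendsto_card_roots_filter_square_div_natDegree :
    Tendsto (fun n ↦ (((poly n).roots.filter (· ∈ square)).card : ℝ) / (poly n).natDegree)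
      atTop (nhds 1) := by
  refine tendsto_of_tendsto_of_tendsto_of_le_of_le (tendsto_natCast_div_add_atTop (1 : ℝ))
    tendsto_const_nhds (fun n ↦ ?_) (fun n ↦ ?_) <;>
    simp only [natDegree_poly, Nat.cast_add, Nat.cast_one]
  · gcongr
    exact_mod_cast le_card_roots_filter_square n
  · refine div_le_one_of_le₀ ?_ (by positivity)
    calc (((poly n).roots.filter (· ∈ square)).card : ℝ) ≤ (poly n).roots.card := by
          exact_mod_cast Multiset.card_le_card (Multiset.filter_le _ _)
      _ ≤ (poly n).natDegree := by exact_mod_cast card_roots' (poly n)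
      _ = n + 1 := by rw [natDegree_poly]; push_cast; ring

end

end NaiveGaussLucas

open NaiveGaussLucas in
/-- The naive asymptotic Gauss–Lucas question has a negative answer: for the open square
`Ω = (-2,2) × (-4,0)` and every `n ≥ 1` there is a polynomial of degree `n + 1` with at least
`n` roots (with multiplicity) in `Ω` whose derivative has no roots in `Ω`. Consequently there
is a sequence `(p n)` with `deg p_n = n + 1 → ∞` and `#_{p_n}(Ω)/deg p_n → 1`, yet
`#_{p_n'}(Ω) = 0` for all `n`. -/
theorem naive_asymptotic_gauss_lucas_fails_square :
    let Ω : Set ℂ := {z : ℂ | -2 < z.re ∧ z.re < 2 ∧ -4 < z.im ∧ z.im < 0}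
    (∀ n : ℕ, 1 ≤ n → ∃ p : Polynomial ℂ, p.natDegree = n + 1 ∧
        n ≤ (p.roots.filter (· ∈ Ω)).card ∧
        ((p.derivative).roots.filter (· ∈ Ω)).card = 0) ∧
    ∃ p : ℕ → Polynomial ℂ,
      (∀ n, (p n).natDegree = n + 1) ∧
      Tendsto (fun n => (p n).natDegree) atTop atTop ∧
      Tendsto
        (fun n => ((((p n).roots.filter (· ∈ Ω)).card : ℝ) / ((p n).natDegree : ℝ)))
        atTop (nhds 1) ∧
      (∀ n, (((p n).derivative).roots.filter (· ∈ Ω)).card = 0) := by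
  refine ⟨fun n _ ↦ ⟨poly n, natDegree_poly n, le_card_roots_filter_square n,
    card_roots_derivative_filter_square n⟩, poly, natDegree_poly, ?_,
    tendsto_card_roots_filter_square_div_natDegree, card_roots_derivative_filter_square⟩
  simpa only [natDegree_poly] using tendsto_add_atTop_nat 1
end

section
/- For every natural number n ≥ 1, every complex root of the derivative of the polynomial (X − i)·T_n(X), where T_n is the n-th Chebyshev polynomial of the first kind, has strictly positive imaginary part. -/
/-!
All roots of `(X - i) T_n` lie in the closed upper half-plane, since those of `T_n` are real;
by Gauss–Lucas so do the roots of its derivative. A real root `x` of the derivative would satisfy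
`T_n(x) + (x - i) T_n'(x) = 0`; the imaginary part forces `T_n'(x) = 0`, hence `T_n(x) = 0`,
which is impossible because `T_n` has simple roots.
-/

open Polynomial

namespace Polynomial

theorem im_nonneg_of_isRoot_derivative {P : ℂ[X]} (hP : 0 < P.degree)
    (hroots : ∀ w, P.IsRoot w → 0 ≤ w.im) {z : ℂ} (hz : P.derivative.IsRoot z) : 0 ≤ z.im := by
  rw [eq_centerMass_of_eval_derivative_eq_zero hP hz]
  refine (convex_halfSpace_ge Complex.imLm.isLinear 0).centerMass_mem
    (fun w _ => derivRootWeight_nonneg P z w) (sum_derivRootWeight_pos hP z) fun w hw => ?_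
  exact hroots w (isRoot_of_mem_roots (Multiset.mem_toFinset.mp hw))

theorem eval_derivative_X_sub_C_mul_map_ofReal_ne_zero {P : ℝ[X]} (hP : P.Separable)
    {w : ℂ} (hw : w.im ≠ 0) (x : ℝ) :
    (derivative ((X - C w) * P.map Complex.ofRealHom)).eval (x : ℂ) ≠ 0 := by
  intro h
  replace h : ((P.eval x : ℝ) : ℂ) + (x - w) * ((derivative P).eval x : ℝ) = 0 := by
    simpa [derivative_map, eval_map, ← Complex.ofRealHom_eq_coe, eval₂_at_apply] using h
  have hder : (derivative P).eval x = 0 := by simpa [hw] using congrArg Complex.im h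
  have hval : P.eval x = 0 := by simpa [hder] using congrArg Complex.re h
  exact hP.eval₂_derivative_ne_zero (RingHom.id ℝ) hval hder

namespace Chebyshev

theorem splits_T_real (n : ℕ) : (T ℝ n).Splits := by
  rw [splits_iff_card_roots, roots_T_real, natDegree_T, Finset.card_val,
    Finset.card_image_of_injOn ((Finset.range n).nodup_map_iff_injOn.mp (roots_T_real_nodup n))]
  simp

theorem separable_T_real (n : ℕ) : (T ℝ n).Separable := by
  rw [← nodup_roots_iff_of_splits (T_ne_zero ℝ n) (splits_T_real n), roots_T_real]
  exact Finset.nodup _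

theorem im_eq_zero_of_isRoot_T_complex {n : ℕ} {z : ℂ} (hz : (T ℂ n).IsRoot z) : z.im = 0 := by
  rw [← map_T Complex.ofRealHom] at hz
  obtain ⟨x, rfl⟩ := (splits_T_real n).mem_range_of_isRoot (T_ne_zero ℝ n) hz
  exact Complex.ofReal_im x

end Chebyshev

end Polynomial

open Polynomial.Chebyshev in
theorem chebyshev_shifted_derivative_roots_im_pos_general (n : ℕ) :
    ∀ z : ℂ, (derivative ((X - C Complex.I) * Polynomial.Chebyshev.T ℂ (n : ℤ))).IsRoot z →
      0 < z.im := by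
  intro z hz
  have hdeg : 0 < ((X - C Complex.I) * T ℂ (n : ℤ)).degree := by
    rw [degree_mul, degree_X_sub_C, degree_T, Int.natAbs_natCast]
    positivity
  have hroots : ∀ w, ((X - C Complex.I) * T ℂ (n : ℤ)).IsRoot w → 0 ≤ w.im := by
    intro w hw
    rcases (by simpa using hw : w - Complex.I = 0 ∨ (T ℂ n).IsRoot w) with hI | hT
    · simp [sub_eq_zero.mp hI]
    · exact (im_eq_zero_of_isRoot_T_complex hT).ge
  refine (im_nonneg_of_isRoot_derivative hdeg hroots hz).lt_of_ne fun him => ?_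
  have hz_real : (z.re : ℂ) = z := Complex.ext rfl (by simp [him])
  rw [← hz_real, ← map_T Complex.ofRealHom] at hz
  exact eval_derivative_X_sub_C_mul_map_ofReal_ne_zero (separable_T_real n) (by simp) z.re hz

/-- For every `n ≥ 1`, every complex root of the derivative of `(X - i) * T n`, where `T n` is
the `n`-th Chebyshev polynomial of the first kind, has strictly positive imaginary part. -/
theorem chebyshev_shifted_derivative_roots_im_pos (n : ℕ) (hn : 1 ≤ n) :
    ∀ z : ℂ, (derivative ((X - C Complex.I) * Polynomial.Chebyshev.T ℂ (n : ℤ))).IsRoot z →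
      0 < z.im :=
  chebyshev_shifted_derivative_roots_im_pos_general n
end

section
/- Let 1 ≤ s < 2 and let K ⊂ ℂ be a compact set. Then there exists a constant C = C(s, K) > 0 such that for every nonzero complex polynomial q, ( ∫_K |q'(z)/q(z)|^s dA(z) )^{1/s} ≤ C · deg q. (The integrand is defined arbitrarily at the finitely many zeros of q, which form a set of dA-measure zero.) -/
open MeasureTheory Polynomial
open scoped ENNReal NNReal Real

/-!
Off the zeros of `q`, `q'/q = ∑ 1/(z - a)` over the roots `a` counted with multiplicity, so by
Minkowski's inequality `‖q'/q‖_{L^s(K)} ≤ deg q · sup_a ‖1/(z - a)‖_{L^s(K)}`. The supremum is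
finite: `|z - a|^(-s) ≤ 1` outside the unit disc about `a`, and by translation invariance the
integral over that disc is `∫_{|w|<1} |w|^(-s) dx dy`, finite since `s < 2 = dim_ℝ ℂ`.
The factor `1/π` in `dA` only decreases the left-hand side.
-/

open Metric

namespace MeasureTheory

section AddHaar

variable {E : Type*} [NormedAddCommGroup E] [NormedSpace ℝ E] [FiniteDimensional ℝ E]
  [MeasurableSpace E] [BorelSpace E] {μ : Measure E} [μ.IsAddHaarMeasure]

theorem lintegral_ball_enorm_rpow_neg_lt_top (hd : 1 ≤ Module.finrank ℝ E) {s : ℝ}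
    (hs : s < Module.finrank ℝ E) (r : ℝ) :
    ∫⁻ w in ball 0 r, ‖w‖ₑ ^ (-s) ∂μ < ∞ := by
  have : Nontrivial E := Module.nontrivial_of_finrank_pos (R := ℝ) hd
  have hint : IntegrableOn (fun w : E ↦ ‖w‖ ^ (-s)) (ball 0 r) μ :=
    integrableOn_ball_of_norm_le_rpow hd hs (C := 1)
      (ae_of_all _ fun w ↦ by simp [abs_of_nonneg (Real.rpow_nonneg (norm_nonneg w) _)])
      (continuous_norm.measurable.pow_const _).aestronglyMeasurable
  refine lt_of_eq_of_lt (lintegral_congr_ae ?_) hint.2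
  filter_upwards [ae_restrict_of_ae (compl_mem_ae_iff.2 (measure_singleton (μ := μ) 0))]
    with w (hw : w ≠ 0)
  rw [Real.enorm_of_nonneg (by positivity), ← ENNReal.ofReal_rpow_of_pos (norm_pos_iff.2 hw),
    ofReal_norm]

end AddHaar

theorem setLIntegral_enorm_sub_rpow_neg_le {E : Type*} [NormedAddCommGroup E] [MeasurableSpace E]
    [BorelSpace E] {μ : Measure E} [μ.IsAddRightInvariant] {s : ℝ} (hs : 0 ≤ s) (K : Set E)
    (a : E) :
    ∫⁻ z in K, ‖z - a‖ₑ ^ (-s) ∂μ ≤ μ K + ∫⁻ w in ball 0 1, ‖w‖ₑ ^ (-s) ∂μ := by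
  set g : E → ℝ≥0∞ := fun w ↦ ‖w‖ₑ ^ (-s)
  have hg : Measurable g := measurable_enorm.pow_const _
  have hle : ∀ z, g (z - a) ≤ 1 + (ball 0 1).indicator g (z - a) := by
    intro z
    by_cases hz : z - a ∈ ball 0 1
    · simp [Set.indicator_of_mem hz]
    · rw [Set.indicator_of_notMem hz, add_zero]
      have h1 : 1 ≤ ‖z - a‖ₑ := by
        rw [← ofReal_norm, ENNReal.one_le_ofReal]
        simpa using hz
      simpa only [g, ENNReal.rpow_neg] using
        ENNReal.inv_le_one.2 (ENNReal.one_rpow s ▸ ENNReal.rpow_le_rpow h1 hs)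
  calc ∫⁻ z in K, g (z - a) ∂μ
      ≤ ∫⁻ z in K, (1 + (ball 0 1).indicator g (z - a)) ∂μ := lintegral_mono hle
    _ = μ K + ∫⁻ z in K, (ball 0 1).indicator g (z - a) ∂μ := by
      rw [lintegral_add_left measurable_const, setLIntegral_one]
    _ ≤ μ K + ∫⁻ z, (ball 0 1).indicator g (z - a) ∂μ := by
      gcongr; exact Measure.restrict_le_self
    _ = μ K + ∫⁻ w in ball 0 1, g w ∂μ := by
      rw [lintegral_sub_right_eq_self, lintegral_indicator measurableSet_ball]

theorem eLpNorm_multiset_sum_le {α F : Type*} [MeasurableSpace α] {μ : Measure α}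
    [NormedAddCommGroup F] {p : ℝ≥0∞} (R : Multiset (α → F))
    (hR : ∀ f ∈ R, AEStronglyMeasurable f μ) (hp : 1 ≤ p) :
    eLpNorm R.sum p μ ≤ (R.map fun f ↦ eLpNorm f p μ).sum :=
  Multiset.le_sum_of_subadditive_on_pred (fun f : α → F ↦ eLpNorm f p μ)
    (fun f ↦ AEStronglyMeasurable f μ) eLpNorm_zero.le aestronglyMeasurable_zero
    (fun _ _ hf hg ↦ eLpNorm_add_le hf hg hp) (fun _ _ hf hg ↦ hf.add hg) R hR

end MeasureTheory

theorem Polynomial.eval_derivative_div_eval_ae_eq {k : Type*} [Field k] [IsAlgClosed k]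
    [MeasurableSpace k] {q : k[X]} (hq : q ≠ 0) (μ : Measure k) [NullSingletonClass μ] :
    (fun z ↦ q.derivative.eval z / q.eval z) =ᵐ[μ]
      fun z ↦ (q.roots.map fun a ↦ 1 / (z - a)).sum := by
  filter_upwards [compl_mem_ae_iff.2 ((finite_setOfPred_isRoot hq).measure_zero μ)] with z hz
  exact (IsAlgClosed.splits q).eval_derivative_div_eval_of_ne_zero hz

theorem Complex.eLpNorm_one_div_sub_le {s : ℝ} (hs : 0 < s) (K : Set ℂ) (a : ℂ) :
    eLpNorm (fun z ↦ 1 / (z - a)) (ENNReal.ofReal s) (volume.restrict K) ≤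
      (volume K + ∫⁻ w in ball (0 : ℂ) 1, ‖w‖ₑ ^ (-s)) ^ (1 / s) := by
  rw [eLpNorm_eq_lintegral_rpow_enorm_toReal (by simpa using hs) ENNReal.ofReal_ne_top,
    ENNReal.toReal_ofReal hs.le]
  gcongr
  refine le_trans (lintegral_mono fun z ↦ ?_) (setLIntegral_enorm_sub_rpow_neg_le hs.le K a)
  have : ‖1 / (z - a)‖ₑ ≤ ‖z - a‖ₑ⁻¹ := by
    rcases eq_or_ne (z - a) 0 with h | h
    · simp [h]
    · rw [one_div, enorm_inv h]
  simpa only [ENNReal.rpow_neg, ← ENNReal.inv_rpow] using ENNReal.rpow_le_rpow this hs.le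

theorem Polynomial.eLpNorm_eval_derivative_div_eval_le {q : ℂ[X]} (hq : q ≠ 0) {s : ℝ}
    (hs : 1 ≤ s) (K : Set ℂ) :
    eLpNorm (fun z ↦ q.derivative.eval z / q.eval z) (ENNReal.ofReal s) (volume.restrict K) ≤
      q.natDegree * (volume K + ∫⁻ w in ball (0 : ℂ) 1, ‖w‖ₑ ^ (-s)) ^ (1 / s) := by
  set B := (volume K + ∫⁻ w in ball (0 : ℂ) 1, ‖w‖ₑ ^ (-s)) ^ (1 / s)
  set R := q.roots.map fun a (z : ℂ) ↦ 1 / (z - a)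
  have hR : ∀ f ∈ R, AEStronglyMeasurable f (volume.restrict K) := by
    simp only [R, Multiset.mem_map]
    rintro _ ⟨a, -, rfl⟩
    exact ((measurable_id.sub_const a).const_div 1).aestronglyMeasurable
  calc _ = eLpNorm R.sum (ENNReal.ofReal s) (volume.restrict K) := by
        rw [eLpNorm_congr_ae (eval_derivative_div_eval_ae_eq hq _)]
        congr 1; ext z; simp [R, Pi.multiset_sum_apply, Multiset.map_map]
    _ ≤ (R.map fun f ↦ eLpNorm f (ENNReal.ofReal s) (volume.restrict K)).sum :=
        eLpNorm_multiset_sum_le R hR (by simpa using hs)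
    _ ≤ q.roots.card • B := by
        refine (Multiset.sum_le_card_nsmul _ B ?_).trans_eq (by simp [R])
        simp only [R, Multiset.map_map, Multiset.mem_map, Function.comp_apply]
        rintro _ ⟨a, -, rfl⟩
        exact Complex.eLpNorm_one_div_sub_le (by linarith) K a
    _ = _ := by rw [nsmul_eq_mul, ← (IsAlgClosed.splits q).natDegree_eq_card_roots]

/-- For `1 ≤ s < 2` and a compact `K ⊂ ℂ` there is a constant `C = C(s, K) > 0` such that for
every nonzero complex polynomial `q`,
`(∫_K |q'(z)/q(z)|^s dA(z))^(1/s) ≤ C · deg q`, where `dA = (1/π) dx dy` is the normalized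
area measure on `ℂ`. (At the finitely many zeros of `q`, a `dA`-null set, the integrand takes
the junk value `0` coming from division by zero.) -/
theorem logDeriv_Lp_bound (s : ℝ) (hs1 : 1 ≤ s) (hs2 : s < 2)
    (K : Set ℂ) (hK : IsCompact K) :
    ∃ C : ℝ, 0 < C ∧ ∀ q : Polynomial ℂ, q ≠ 0 →
      (∫⁻ z in K, ((‖(derivative q).eval z / q.eval z‖₊ : ℝ≥0∞)) ^ s
          ∂((ENNReal.ofReal Real.pi)⁻¹ • volume)) ^ (1 / s)
        ≤ ENNReal.ofReal C * (q.natDegree : ℝ≥0∞) := by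
  have hs0 : 0 < s := by linarith
  set B := (volume K + ∫⁻ w in ball (0 : ℂ) 1, ‖w‖ₑ ^ (-s)) ^ (1 / s)
  have hB : B ≠ ∞ := ENNReal.rpow_ne_top_of_nonneg (by positivity) <| ENNReal.add_ne_top.2
    ⟨hK.measure_lt_top.ne, (lintegral_ball_enorm_rpow_neg_lt_top (by simp) (by simpa) 1).ne⟩
  have hdA : (ENNReal.ofReal π)⁻¹ • volume ≤ (volume : Measure ℂ) :=
    Measure.le_iff'.2 fun t ↦ mul_le_of_le_one_left'
      (ENNReal.inv_le_one.2 (ENNReal.one_le_ofReal.2 (by linarith [Real.pi_gt_three])))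
  refine ⟨B.toReal + 1, by positivity, fun q hq ↦ ?_⟩
  calc _ = eLpNorm (fun z ↦ q.derivative.eval z / q.eval z) (ENNReal.ofReal s)
        (((ENNReal.ofReal π)⁻¹ • volume).restrict K) := by
        rw [eLpNorm_eq_lintegral_rpow_enorm_toReal (by simpa using hs0) ENNReal.ofReal_ne_top,
          ENNReal.toReal_ofReal hs0.le]
        rfl
    _ ≤ eLpNorm (fun z ↦ q.derivative.eval z / q.eval z) (ENNReal.ofReal s)
        (volume.restrict K) := eLpNorm_mono_measure _ (Measure.restrict_mono subset_rfl hdA)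
    _ ≤ q.natDegree * B := eLpNorm_eval_derivative_div_eval_le hq hs1 K
    _ ≤ ENNReal.ofReal (B.toReal + 1) * q.natDegree := by
        rw [mul_comm]
        gcongr
        exact (ENNReal.le_ofReal_iff_toReal_le hB (by positivity)).2 (by linarith)
end
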